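/- Let $N \geq 3$ be odd, let $a_1,\dots,a_N$ be real numbers, and let $x_1,\dots,x_N$ be real numbers with $x_1 > x_2 > \dots > x_N$. Then $\sum_{1 \le i < j \le N} \big( 3 a_i a_j e^{-(x_i - x_j)} + (-1)^{i+j}(a_j^2 x_i - a_i^2 x_j) \big) = \sum_{1 \le i < j \le N} 3 a_i a_j e^{-(x_i - x_j)} - \sum_{i \text{ even},\ 2 \le i \le N-1} \Big( (x_{i-1} - x_i) \sum_{j \ge i} (-1)^j a_j^2 + (x_i - x_{i+1}) \sum_{j \le i} (-1)^j a_j^2 \Big)$. -/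

import Mathlib

/-!
With `b j = (-1) ^ j * a j ^ 2`, the sign term of the pair `i < j` is the antisymmetric expression
`(-1) ^ i * x i * b j - (-1) ^ j * x j * b i`, so the claim is an algebraic identity in `x` and `b`,
valid in any commutative ring. It is proved by induction on `N = 2m + 1`, adding the two indices
`2m + 2, 2m + 3` at a time: the alternating sum `∑ (-1) ^ i * x i` over `1..2m+1` is minus the sum of
the consecutive differences `x (i - 1) - x i` over even `i`, minus `x (2m + 1)`, which is exactly what
the new columns contribute on both sides.
-/

open Finset

lemma Icc_one_filter_lt (N i : ℕ) : (Icc 1 N).filter (i < ·) = Ioc i N := by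
  ext j; simp only [mem_filter, mem_Icc, mem_Ioc]; omega

lemma Icc_two_filter_even_add_two (m : ℕ) :
    (Icc 2 (2 * m + 2)).filter Even = insert (2 * m + 2) ((Icc 2 (2 * m)).filter Even) := by
  ext i; simp only [mem_filter, mem_insert, mem_Icc, Nat.even_iff]; omega

lemma sum_Icc_sum_Ioc_succ_top {M : Type*} [AddCommMonoid M] (F : ℕ → ℕ → M) (n : ℕ) :
    ∑ i ∈ Icc 1 (n + 1), ∑ j ∈ Ioc i (n + 1), F i j
      = ∑ i ∈ Icc 1 n, ∑ j ∈ Ioc i n, F i j + ∑ i ∈ Icc 1 n, F i (n + 1) := by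
  rw [sum_Icc_succ_top (by omega), Ioc_self, sum_empty, add_zero, ← sum_add_distrib]
  refine sum_congr rfl fun i hi => sum_Ioc_succ_top (mem_Icc.1 hi).2 _

variable {R : Type*} [CommRing R]

lemma sum_Icc_neg_one_pow_mul_odd (x : ℕ → R) (m : ℕ) :
    ∑ i ∈ Icc 1 (2 * m + 1), (-1) ^ i * x i
      = -∑ i ∈ (Icc 2 (2 * m)).filter Even, (x (i - 1) - x i) - x (2 * m + 1) := by
  induction m with
  | zero => simp
  | succ m ih =>
    rw [show 2 * (m + 1) + 1 = 2 * m + 1 + 1 + 1 by ring, sum_Icc_succ_top (by omega),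
      sum_Icc_succ_top (by omega), ih, show 2 * (m + 1) = 2 * m + 2 by ring,
      Icc_two_filter_even_add_two, sum_insert (by simp)]
    simp only [show 2 * m + 1 + 1 = 2 * m + 2 by ring, show 2 * m + 2 - 1 = 2 * m + 1 by omega,
      Even.neg_one_pow (⟨m + 1, by ring⟩ : Even (2 * m + 2)),
      Odd.neg_one_pow (⟨m + 1, by ring⟩ : Odd (2 * m + 2 + 1))]
    ring

lemma sum_antisymm_neg_one_pow_mul (b x : ℕ → R) (s : Finset ℕ) (j : ℕ) :
    ∑ i ∈ s, ((-1) ^ i * x i * b j - (-1) ^ j * x j * b i)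
      = b j * ∑ i ∈ s, (-1) ^ i * x i - (-1) ^ j * x j * ∑ i ∈ s, b i := by
  rw [mul_sum, mul_sum, ← sum_sub_distrib]
  exact sum_congr rfl fun i _ => by ring

theorem sum_Ioc_antisymm_neg_one_pow_odd (b x : ℕ → R) (m : ℕ) :
    ∑ i ∈ Icc 1 (2 * m + 1), ∑ j ∈ Ioc i (2 * m + 1),
        ((-1) ^ i * x i * b j - (-1) ^ j * x j * b i)
      = -∑ i ∈ (Icc 2 (2 * m)).filter Even,
          ((x (i - 1) - x i) * ∑ j ∈ Icc i (2 * m + 1), b j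
            + (x i - x (i + 1)) * ∑ j ∈ Icc 1 i, b j) := by
  induction m with
  | zero => simp
  | succ m ih =>
    have htail : ∀ i ∈ (Icc 2 (2 * m)).filter Even,
        (x (i - 1) - x i) * ∑ j ∈ Icc i (2 * m + 1 + 1 + 1), b j
            + (x i - x (i + 1)) * ∑ j ∈ Icc 1 i, b j
          = (x (i - 1) - x i) * ∑ j ∈ Icc i (2 * m + 1), b j
            + (x i - x (i + 1)) * ∑ j ∈ Icc 1 i, b j
            + (x (i - 1) - x i) * (b (2 * m + 1 + 1) + b (2 * m + 1 + 1 + 1)) := by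
      intro i hi
      have hle : i ≤ 2 * m := (mem_Icc.1 (mem_filter.1 hi).1).2
      rw [sum_Icc_succ_top (by omega), sum_Icc_succ_top (by omega)]
      ring
    rw [show 2 * (m + 1) + 1 = 2 * m + 1 + 1 + 1 by ring, sum_Icc_sum_Ioc_succ_top,
      sum_Icc_sum_Ioc_succ_top, ih, sum_antisymm_neg_one_pow_mul, sum_antisymm_neg_one_pow_mul,
      show 2 * (m + 1) = 2 * m + 1 + 1 by ring, Icc_two_filter_even_add_two, sum_insert (by simp),
      sum_congr rfl htail]
    conv_rhs => rw [sum_add_distrib, ← sum_mul]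
    simp only [sum_Icc_succ_top (show 1 ≤ 2 * m + 1 + 1 by omega), sum_Icc_neg_one_pow_mul_odd]
    have hpair : ∑ j ∈ Icc (2 * m + 2) (2 * m + 1 + 1 + 1), b j = b (2 * m + 2) + b (2 * m + 3) := by
      rw [sum_Icc_succ_top (by omega), Icc_self, sum_singleton]
    simp only [hpair, show 2 * m + 2 - 1 = 2 * m + 1 by omega, pow_succ, pow_mul]
    ring

theorem INordered_odd_rewrite
    (N : ℕ) (hNodd : Odd N) (a x : ℕ → ℝ) :
    (∑ i ∈ Finset.Icc 1 N, ∑ j ∈ (Finset.Icc 1 N).filter (fun j => i < j),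
        (3 * a i * a j * Real.exp (-(x i - x j))
          + (-1 : ℝ) ^ (i + j) * (a j ^ 2 * x i - a i ^ 2 * x j)))
    = (∑ i ∈ Finset.Icc 1 N, ∑ j ∈ (Finset.Icc 1 N).filter (fun j => i < j),
          3 * a i * a j * Real.exp (-(x i - x j)))
      - ∑ i ∈ (Finset.Icc 2 (N - 1)).filter (fun i => Even i),
          ((x (i - 1) - x i) * ∑ j ∈ Finset.Icc i N, (-1 : ℝ) ^ j * a j ^ 2
            + (x i - x (i + 1)) * ∑ j ∈ Finset.Icc 1 i, (-1 : ℝ) ^ j * a j ^ 2) := by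
  obtain ⟨m, rfl⟩ := hNodd
  rw [Nat.add_sub_cancel, sub_eq_add_neg,
    ← sum_Ioc_antisymm_neg_one_pow_odd (fun j => (-1) ^ j * a j ^ 2) x m, ← sum_add_distrib]
  refine sum_congr rfl fun i _ => ?_
  rw [Icc_one_filter_lt, ← sum_add_distrib]
  refine sum_congr rfl fun j _ => ?_
  rw [pow_add]
  ring
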